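/- arXiv:1110.1580 — 3 statements merged into one kernel-verified Lean document; each statement's English description precedes it below -/
import Mathlib

section
/- Consider the allocation problem on a uniform 2-point metric with k servers available at all times, where at odd steps the cost vector (1,1,...,1,0) arrives at location 1 and at even steps the cost vector (1,0,...,0) arrives at location 2. Any integral solution over T time steps incurs total cost at least ⌊T/2⌋·min(1,1) = Ω(T): more precisely, during any two consecutive time steps, the solution pays at least 1 (hit or movement cost). -/
/-! Consecutive steps carry opposite requests: the odd step is free only when all `k` servers
sit at location 1, the even step only when at least one does not. So a solution that does not
move between the two steps pays a hit cost at one of them, and one that moves pays at least 1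
for the move, since server counts are integers. -/

def hitCost (k t n : ℕ) : ℝ :=
  if Odd t then (if n = k then 0 else 1) else (if n < k then 0 else 1)

lemma hitCost_nonneg (k t n : ℕ) : 0 ≤ hitCost k t n := by
  unfold hitCost
  split_ifs <;> norm_num

lemma one_le_hitCost_add_hitCost_succ (k t n : ℕ) :
    1 ≤ hitCost k t n + hitCost k (t + 1) n := by
  unfold hitCost
  rcases Nat.even_or_odd t with ht | ht
  · simp only [Nat.not_odd_iff_even.mpr ht, ht.add_one, if_true, if_false]
    split_ifs <;> first | omega | norm_num
  · simp only [ht, Nat.not_odd_iff_even.mpr ht.add_one, if_true, if_false]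
    split_ifs <;> first | omega | norm_num

lemma one_le_abs_natCast_sub_natCast {a b : ℕ} (h : a ≠ b) : (1 : ℝ) ≤ |(a : ℝ) - b| := by
  rcases h.lt_or_gt with hab | hab
  · have : (a : ℝ) + 1 ≤ b := by exact_mod_cast hab
    rw [abs_sub_comm]
    exact le_abs.mpr (Or.inl (by linarith))
  · have : (b : ℝ) + 1 ≤ a := by exact_mod_cast hab
    exact le_abs.mpr (Or.inl (by linarith))

theorem stmt_6_general (k : ℕ) (s : ℕ → ℕ)
    (hit move : ℕ → ℝ)
    (hhit : ∀ t, hit t = if Odd t then (if s t = k then 0 else 1)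
                         else (if s t < k then 0 else 1))
    (hmove : ∀ t, move t = |(s t : ℝ) - (s (t - 1) : ℝ)|) :
    ∀ t, 1 ≤ t → 1 ≤ (hit t + move t) + (hit (t + 1) + move (t + 1)) := by
  intro t _
  have hmove_succ : move (t + 1) = |(s (t + 1) : ℝ) - s t| := by simpa using hmove (t + 1)
  have hmove_nonneg : 0 ≤ move t := (hmove t).symm ▸ abs_nonneg _
  have hmove_succ_nonneg : 0 ≤ move (t + 1) := hmove_succ ▸ abs_nonneg _
  rw [show hit t = hitCost k t (s t) from hhit t, show hit (t + 1) = hitCost k (t + 1) (s (t + 1))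
    from hhit (t + 1)]
  have hhit_nonneg := hitCost_nonneg k t (s t)
  have hhit_succ_nonneg := hitCost_nonneg k (t + 1) (s (t + 1))
  by_cases hstay : s (t + 1) = s t
  · have hhit_pair := one_le_hitCost_add_hitCost_succ k t (s t)
    rw [hstay]
    linarith
  · have hmove_one := one_le_abs_natCast_sub_natCast hstay
    linarith

/-- Integral allocation on a uniform 2-point metric: `s t` is the number of servers
at location 1 at time `t` (location 2 has `k - s t`). At odd steps the cost vector
`(1,…,1,0)` arrives at location 1 (hit cost 1 unless all `k` servers are there);
at even steps `(1,0,…,0)` arrives at location 2 (hit cost 1 unless at least one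
server is there, i.e. `s t < k`). Movement cost is `|s t - s (t-1)|`.
Any two consecutive time steps incur total cost at least 1. -/
theorem stmt_6 (k : ℕ) (hk : 1 ≤ k) (s : ℕ → ℕ) (hs : ∀ t, s t ≤ k)
    (hit move : ℕ → ℝ)
    (hhit : ∀ t, hit t = if Odd t then (if s t = k then 0 else 1)
                         else (if s t < k then 0 else 1))
    (hmove : ∀ t, move t = |(s t : ℝ) - (s (t - 1) : ℝ)|) :
    ∀ t, 1 ≤ t → 1 ≤ (hit t + move t) + (hit (t + 1) + move (t + 1)) :=
  stmt_6_general k s hit move hhit hmove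
end

section
/- Let λ : {1,...,s} → ℝ≥0 and suppose two consecutive blocks B₁ = {j,...,j+s₁−1} and B₂ = {j+s₁,...,j+s₁+s₂−1} each satisfy the prefix-average property (for every prefix of the block, the average of λ over the prefix is at most the average over the whole block), and suppose avg_{B₁}(λ) ≤ avg_{B₂}(λ). Then the merged block B = B₁ ∪ B₂ also satisfies the prefix-average property: for every 1 ≤ r ≤ s₁+s₂, (1/r)·Σ_{j'=j}^{j+r−1} λ(j') ≤ (1/(s₁+s₂))·Σ_{j'∈B} λ(j'). -/
/-!
A prefix of the merged block that stays inside `B₁` has average at most `avg B₁`, and `avg B₁` is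
at most the mediant `avg B`. A longer prefix is `B₁` followed by a prefix of `B₂` of length
`t ≤ s₂` and average at most `avg B₂`; after clearing denominators the claim is a nonnegative
combination of `avg B₁ ≤ avg B₂` and of that prefix bound.
-/

open Finset

theorem sum_range_add_shift {M : Type*} [AddCommMonoid M] (f : ℕ → M) (j m n : ℕ) :
    ∑ i ∈ range (m + n), f (j + i) = ∑ i ∈ range m, f (j + i) + ∑ i ∈ range n, f (j + m + i) := by
  simp only [sum_range_add, add_assoc]

theorem div_le_add_div_add {a b p q : ℝ} (hp : 0 < p) (hq : 0 < q) (h : a / p ≤ b / q) :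
    a / p ≤ (a + b) / (p + q) := by
  rw [div_le_div_iff₀ hp hq] at h
  rw [div_le_div_iff₀ hp (add_pos hp hq)]
  linarith

theorem add_div_add_le_add_div_add {a b c p q t : ℝ} (hp : 0 < p) (ht : 0 < t) (htq : t ≤ q)
    (hab : a / p ≤ b / q) (hcb : c / t ≤ b / q) :
    (a + c) / (p + t) ≤ (a + b) / (p + q) := by
  have hq : 0 < q := ht.trans_le htq
  rw [div_le_div_iff₀ hp hq] at hab
  rw [div_le_div_iff₀ ht hq] at hcb
  rw [div_le_div_iff₀ (add_pos hp ht) (add_pos hp hq)]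
  -- `q * (rhs - lhs) = (q - t) * (b * p - a * q) + (p + q) * (b * t - c * q)`
  refine le_of_mul_le_mul_left ?_ hq
  nlinarith [mul_nonneg (sub_nonneg.2 htq) (sub_nonneg.2 hab),
    mul_nonneg (add_pos hp hq).le (sub_nonneg.2 hcb)]

theorem stmt_16_general (lam : ℕ → ℝ)
    (j s₁ s₂ : ℕ) (hs₁ : 1 ≤ s₁) (hs₂ : 1 ≤ s₂)
    (hB₁ : ∀ r, 1 ≤ r → r ≤ s₁ →
      (∑ i ∈ Finset.range r, lam (j + i)) / r ≤
        (∑ i ∈ Finset.range s₁, lam (j + i)) / s₁)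
    (hB₂ : ∀ r, 1 ≤ r → r ≤ s₂ →
      (∑ i ∈ Finset.range r, lam (j + s₁ + i)) / r ≤
        (∑ i ∈ Finset.range s₂, lam (j + s₁ + i)) / s₂)
    (havg : (∑ i ∈ Finset.range s₁, lam (j + i)) / s₁ ≤
      (∑ i ∈ Finset.range s₂, lam (j + s₁ + i)) / s₂) :
    ∀ r, 1 ≤ r → r ≤ s₁ + s₂ →
      (∑ i ∈ Finset.range r, lam (j + i)) / r ≤
        (∑ i ∈ Finset.range (s₁ + s₂), lam (j + i)) / (s₁ + s₂) := by
  have hs₁' : (0 : ℝ) < s₁ := by exact_mod_cast hs₁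
  have hs₂' : (0 : ℝ) < s₂ := by exact_mod_cast hs₂
  intro r hr hrs
  rw [sum_range_add_shift]
  rcases le_or_gt r s₁ with hr₁ | hr₁
  · exact (hB₁ r hr hr₁).trans (div_le_add_div_add hs₁' hs₂' havg)
  · obtain ⟨t, rfl⟩ := Nat.exists_eq_add_of_le hr₁.le
    have ht : 1 ≤ t := by omega
    have hts : t ≤ s₂ := by omega
    rw [sum_range_add_shift, Nat.cast_add]
    exact add_div_add_le_add_div_add hs₁' (by exact_mod_cast ht) (by exact_mod_cast hts) havg
      (hB₂ t ht hts)

/-- If consecutive blocks `B₁ = {j,…,j+s₁-1}` and `B₂ = {j+s₁,…,j+s₁+s₂-1}` each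
satisfy the prefix-average property and `avg_{B₁} λ ≤ avg_{B₂} λ`, then the merged
block `B₁ ∪ B₂` also satisfies the prefix-average property. -/
theorem stmt_16 (lam : ℕ → ℝ) (hlam : ∀ i, 0 ≤ lam i)
    (j s₁ s₂ : ℕ) (hs₁ : 1 ≤ s₁) (hs₂ : 1 ≤ s₂)
    (hB₁ : ∀ r, 1 ≤ r → r ≤ s₁ →
      (∑ i ∈ Finset.range r, lam (j + i)) / r ≤
        (∑ i ∈ Finset.range s₁, lam (j + i)) / s₁)
    (hB₂ : ∀ r, 1 ≤ r → r ≤ s₂ →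
      (∑ i ∈ Finset.range r, lam (j + s₁ + i)) / r ≤
        (∑ i ∈ Finset.range s₂, lam (j + s₁ + i)) / s₂)
    (havg : (∑ i ∈ Finset.range s₁, lam (j + i)) / s₁ ≤
      (∑ i ∈ Finset.range s₂, lam (j + s₁ + i)) / s₂) :
    ∀ r, 1 ≤ r → r ≤ s₁ + s₂ →
      (∑ i ∈ Finset.range r, lam (j + i)) / r ≤
        (∑ i ∈ Finset.range (s₁ + s₂), lam (j + i)) / (s₁ + s₂) :=
  stmt_16_general lam j s₁ s₂ hs₁ hs₂ hB₁ hB₂ havg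
end

section
/- Let v₁ ≤ v₂ ≤ ... ≤ v_m be a nondecreasing sequence of reals and let λ : {1,...,m} → ℝ≥0. Let P be a partition of {1,...,m} into consecutive blocks, and define λ_P(i) = avg_{j ∈ B} λ(j) where B is the block of P containing i. If P' is a coarsening of P obtained by merging consecutive blocks B₁, B₂ with avg_{B₁}(λ) ≤ avg_{B₂}(λ), then Σᵢ λ_P(i)·vᵢ ≥ Σᵢ λ_{P'}(i)·vᵢ. -/
/-!
Only the merged block `B₁ ∪ B₂` changes. On it the new weight is the mediant `μ` of the old
averages `a₁ ≤ a₂`, so `a₁ ≤ μ ≤ a₂`, and the weight changes `a₁ - μ ≤ 0` on `B₁` and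
`a₂ - μ ≥ 0` on `B₂` have total mass zero. Since every entry of `v` on `B₁` is at most every
entry on `B₂`, comparing both against a separating value `c` shows that the weighted sum of `v`
against these changes is nonnegative.
-/

open Finset
open scoped BigOperators

section Separation

variable {ι R : Type*} [CommRing R] [PartialOrder R] [IsOrderedRing R]

theorem sum_mul_add_sum_mul_nonneg {s t : Finset ι} {f g v : ι → R} (c : R)
    (hf : ∀ i ∈ s, f i ≤ 0) (hg : ∀ i ∈ t, 0 ≤ g i)
    (hvs : ∀ i ∈ s, v i ≤ c) (hvt : ∀ i ∈ t, c ≤ v i)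
    (hfg : ∑ i ∈ s, f i + ∑ i ∈ t, g i = 0) :
    0 ≤ ∑ i ∈ s, f i * v i + ∑ i ∈ t, g i * v i :=
  calc 0 = (∑ i ∈ s, f i + ∑ i ∈ t, g i) * c := by rw [hfg, zero_mul]
    _ = ∑ i ∈ s, f i * c + ∑ i ∈ t, g i * c := by rw [add_mul, sum_mul, sum_mul]
    _ ≤ ∑ i ∈ s, f i * v i + ∑ i ∈ t, g i * v i :=
      add_le_add (sum_le_sum fun i hi => mul_le_mul_of_nonpos_left (hvs i hi) (hf i hi))
        (sum_le_sum fun i hi => mul_le_mul_of_nonneg_left (hvt i hi) (hg i hi))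

end Separation

section Mediant

variable {ι K : Type*} [DecidableEq ι] [Field K] [LinearOrder K] [IsStrictOrderedRing K]
  {s t : Finset ι} {f : ι → K}

theorem card_add_card_mul_expect_union (hst : Disjoint s t) :
    (#s + #t) * 𝔼 i ∈ s ∪ t, f i = #s * 𝔼 i ∈ s, f i + #t * 𝔼 i ∈ t, f i := by
  rw [← Nat.cast_add, ← card_union_of_disjoint hst]
  simp only [card_mul_expect, sum_union hst]

theorem expect_le_expect_union (hst : Disjoint s t) (hs : s.Nonempty)
    (h : 𝔼 i ∈ s, f i ≤ 𝔼 i ∈ t, f i) : 𝔼 i ∈ s, f i ≤ 𝔼 i ∈ s ∪ t, f i := by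
  have hpos : (0 : K) < #s + #t := by
    have := hs.card_pos
    positivity
  refine le_of_mul_le_mul_left ?_ hpos
  rw [card_add_card_mul_expect_union hst]
  linarith [mul_le_mul_of_nonneg_left h (Nat.cast_nonneg (α := K) #t)]

theorem expect_union_le_expect (hst : Disjoint s t) (ht : t.Nonempty)
    (h : 𝔼 i ∈ s, f i ≤ 𝔼 i ∈ t, f i) : 𝔼 i ∈ s ∪ t, f i ≤ 𝔼 i ∈ t, f i := by
  have hpos : (0 : K) < #s + #t := by
    have := ht.card_pos
    positivity
  refine le_of_mul_le_mul_left ?_ hpos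
  rw [card_add_card_mul_expect_union hst]
  linarith [mul_le_mul_of_nonneg_left h (Nat.cast_nonneg (α := K) #s)]

end Mediant

section Merge

variable {ι K : Type*} [DecidableEq ι] [Field K] [LinearOrder K] [IsStrictOrderedRing K]

theorem sum_expect_union_mul_le {s t : Finset ι} (hst : Disjoint s t) (lam v : ι → K)
    (hv : ∀ i ∈ s, ∀ j ∈ t, v i ≤ v j) (havg : 𝔼 i ∈ s, lam i ≤ 𝔼 i ∈ t, lam i) :
    ∑ i ∈ s ∪ t, (𝔼 j ∈ s ∪ t, lam j) * v i ≤
      ∑ i ∈ s, (𝔼 j ∈ s, lam j) * v i + ∑ i ∈ t, (𝔼 j ∈ t, lam j) * v i := by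
  rcases s.eq_empty_or_nonempty with rfl | hs
  · simp
  rcases t.eq_empty_or_nonempty with rfl | ht
  · simp
  set a₁ := 𝔼 j ∈ s, lam j
  set a₂ := 𝔼 j ∈ t, lam j
  set μ := 𝔼 j ∈ s ∪ t, lam j
  have hmass : ∑ _i ∈ s, (a₁ - μ) + ∑ _i ∈ t, (a₂ - μ) = 0 := by
    simp only [sum_const, nsmul_eq_mul]
    linear_combination (-1 : K) * card_add_card_mul_expect_union (f := lam) hst
  have key := sum_mul_add_sum_mul_nonneg (t.inf' ht v)
    (fun _ _ => sub_nonpos.2 (expect_le_expect_union hst hs havg))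
    (fun _ _ => sub_nonneg.2 (expect_union_le_expect hst ht havg))
    (fun i hi => le_inf' ht v fun j hj => hv i hi j hj) (fun j hj => inf'_le v hj) hmass
  simp only [sub_mul, sum_sub_distrib] at key
  rw [sum_union hst]
  linarith

end Merge

section Blocks

variable {ι κ κ' K : Type*} [DecidableEq κ]

/-- The paper's `λ_P`: the blocks of the partition are the fibres of `P` inside `s`. -/
def blockAvg [AddCommMonoid K] [Module ℚ≥0 K] (s : Finset ι) (P : ι → κ) (lam : ι → K)
    (i : ι) : K :=
  𝔼 j ∈ s with P j = P i, lam j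

theorem blockAvg_eq_of_eq [AddCommMonoid K] [Module ℚ≥0 K] {s : Finset ι} {P : ι → κ}
    {lam : ι → K} {x : κ} {i : ι} (hi : P i = x) :
    blockAvg s P lam i = 𝔼 j ∈ s with P j = x, lam j := by
  rw [blockAvg, hi]

variable [DecidableEq ι] [DecidableEq κ'] [Field K] [LinearOrder K] [IsStrictOrderedRing K]

theorem sum_blockAvg_mul_le_of_merge (s : Finset ι) (lam v : ι → K)
    {P : ι → κ} {P' : ι → κ'} {x y : κ} (hxy : x ≠ y)
    (hP' : ∀ i j, P' j = P' i ↔ P j = P i ∨ (P j = x ∨ P j = y) ∧ (P i = x ∨ P i = y))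
    (hv : ∀ i ∈ s, ∀ j ∈ s, P i = x → P j = y → v i ≤ v j)
    (havg : 𝔼 i ∈ s with P i = x, lam i ≤ 𝔼 i ∈ s with P i = y, lam i) :
    ∑ i ∈ s, blockAvg s P' lam i * v i ≤ ∑ i ∈ s, blockAvg s P lam i * v i := by
  set B₁ := s.filter (P · = x)
  set B₂ := s.filter (P · = y)
  have hdisj : Disjoint B₁ B₂ := disjoint_filter.2 fun i _ h₁ h₂ => hxy (h₁ ▸ h₂)
  have hunchanged : ∀ i ∈ s.filter (fun i => ¬(P i = x ∨ P i = y)),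
      blockAvg s P' lam i * v i = blockAvg s P lam i * v i := by
    intro i hi
    have hi' := (mem_filter.1 hi).2
    rw [blockAvg, blockAvg, filter_congr fun j _ => (hP' i j).trans (by tauto)]
  have hmerged : ∀ i, (P i = x ∨ P i = y) → blockAvg s P' lam i = 𝔼 j ∈ B₁ ∪ B₂, lam j := by
    intro i hi
    have hfiber : s.filter (P' · = P' i) = s.filter (fun j => P j = x ∨ P j = y) :=
      filter_congr fun j _ => (hP' i j).trans (by rcases hi with h | h <;> rw [h] <;> tauto)
    rw [blockAvg, hfiber, filter_or]
  rw [← sum_filter_add_sum_filter_not s (fun i => P i = x ∨ P i = y),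
    ← sum_filter_add_sum_filter_not s (fun i => P i = x ∨ P i = y), sum_congr rfl hunchanged,
    filter_or, sum_union hdisj, sum_union hdisj]
  refine add_le_add_left ?_ _
  have hB₁ : ∀ i ∈ B₁, P i = x := fun i hi => (mem_filter.1 hi).2
  have hB₂ : ∀ i ∈ B₂, P i = y := fun i hi => (mem_filter.1 hi).2
  calc ∑ i ∈ B₁, blockAvg s P' lam i * v i + ∑ i ∈ B₂, blockAvg s P' lam i * v i
      = ∑ i ∈ B₁ ∪ B₂, (𝔼 j ∈ B₁ ∪ B₂, lam j) * v i := by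
        rw [← sum_union hdisj]
        exact sum_congr rfl fun i hi => by
          rw [hmerged i ((mem_union.1 hi).imp (hB₁ i) (hB₂ i))]
    _ ≤ ∑ i ∈ B₁, (𝔼 j ∈ B₁, lam j) * v i + ∑ i ∈ B₂, (𝔼 j ∈ B₂, lam j) * v i :=
        sum_expect_union_mul_le hdisj lam v (fun i hi j hj =>
          hv i (mem_filter.1 hi).1 j (mem_filter.1 hj).1 (hB₁ i hi) (hB₂ j hj)) havg
    _ = ∑ i ∈ B₁, blockAvg s P lam i * v i + ∑ i ∈ B₂, blockAvg s P lam i * v i :=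
        congrArg₂ (· + ·) (sum_congr rfl fun i hi => by rw [blockAvg_eq_of_eq (hB₁ i hi)])
          (sum_congr rfl fun i hi => by rw [blockAvg_eq_of_eq (hB₂ i hi)])

end Blocks

theorem stmt_17_general (m : ℕ) (v lam : ℕ → ℝ)
    (hv : ∀ i j, i ≤ j → j < m → v i ≤ v j)
    (P : ℕ → ℕ) (hPmono : ∀ i j, i ≤ j → P i ≤ P j)
    (b : ℕ)
    (havg : (∑ i ∈ (Finset.range m).filter (fun i => P i = b), lam i) /
        ((Finset.range m).filter (fun i => P i = b)).card ≤
      (∑ i ∈ (Finset.range m).filter (fun i => P i = b + 1), lam i) /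
        ((Finset.range m).filter (fun i => P i = b + 1)).card)
    (P' : ℕ → ℕ) (hP' : ∀ i, P' i = if P i ≤ b then P i else P i - 1)
    (lamP lamP' : ℕ → ℝ)
    (hlamP : ∀ i, lamP i =
      (∑ j ∈ (Finset.range m).filter (fun j => P j = P i), lam j) /
        ((Finset.range m).filter (fun j => P j = P i)).card)
    (hlamP' : ∀ i, lamP' i =
      (∑ j ∈ (Finset.range m).filter (fun j => P' j = P' i), lam j) /
        ((Finset.range m).filter (fun j => P' j = P' i)).card) :
    ∑ i ∈ Finset.range m, lamP' i * v i ≤ ∑ i ∈ Finset.range m, lamP i * v i := by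
  have hlamP_eq : lamP = blockAvg (range m) P lam := by
    funext i
    rw [hlamP, blockAvg, expect_eq_sum_div_card]
  have hlamP'_eq : lamP' = blockAvg (range m) P' lam := by
    funext i
    rw [hlamP', blockAvg, expect_eq_sum_div_card]
  have hmerge : ∀ i j, P' j = P' i ↔
      P j = P i ∨ (P j = b ∨ P j = b + 1) ∧ (P i = b ∨ P i = b + 1) := by
    intro i j
    rw [hP', hP']
    split_ifs <;> omega
  have hv_blocks : ∀ i ∈ range m, ∀ j ∈ range m, P i = b → P j = b + 1 → v i ≤ v j := by
    intro i _ j hj hi hj'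
    have hij : i ≤ j := by
      by_contra! hji
      have := hPmono j i hji.le
      omega
    exact hv i j hij (mem_range.1 hj)
  rw [hlamP_eq, hlamP'_eq]
  rw [← expect_eq_sum_div_card, ← expect_eq_sum_div_card] at havg
  exact sum_blockAvg_mul_le_of_merge (range m) lam v (Nat.lt_succ_self b).ne hmerge
    hv_blocks havg

/-- Block-averaging against a nondecreasing vector: if `P` partitions `{0,…,m-1}`
into consecutive blocks (given by a monotone block-index map) and `P'` is obtained
from `P` by merging the consecutive blocks `b` and `b+1`, where the average of
`lam` over block `b` is at most that over block `b+1`, then the block-averaged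
hit cost against a nondecreasing `v` only decreases. -/
theorem stmt_17 (m : ℕ) (v lam : ℕ → ℝ)
    (hv : ∀ i j, i ≤ j → j < m → v i ≤ v j)
    (hlam : ∀ i, i < m → 0 ≤ lam i)
    (P : ℕ → ℕ) (hPmono : ∀ i j, i ≤ j → P i ≤ P j)
    (b : ℕ)
    (hB1 : ((Finset.range m).filter (fun i => P i = b)).Nonempty)
    (hB2 : ((Finset.range m).filter (fun i => P i = b + 1)).Nonempty)
    (havg : (∑ i ∈ (Finset.range m).filter (fun i => P i = b), lam i) /
        ((Finset.range m).filter (fun i => P i = b)).card ≤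
      (∑ i ∈ (Finset.range m).filter (fun i => P i = b + 1), lam i) /
        ((Finset.range m).filter (fun i => P i = b + 1)).card)
    (P' : ℕ → ℕ) (hP' : ∀ i, P' i = if P i ≤ b then P i else P i - 1)
    (lamP lamP' : ℕ → ℝ)
    (hlamP : ∀ i, lamP i =
      (∑ j ∈ (Finset.range m).filter (fun j => P j = P i), lam j) /
        ((Finset.range m).filter (fun j => P j = P i)).card)
    (hlamP' : ∀ i, lamP' i =
      (∑ j ∈ (Finset.range m).filter (fun j => P' j = P' i), lam j) /
        ((Finset.range m).filter (fun j => P' j = P' i)).card) :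
    ∑ i ∈ Finset.range m, lamP' i * v i ≤ ∑ i ∈ Finset.range m, lamP i * v i :=
  stmt_17_general m v lam hv P hPmono b havg P' hP' lamP lamP' hlamP hlamP'
end
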